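/- For n ≥ 2, define Z(q,T1,T2) = [ (1 − q^{2C(n,2)} T1^n T2)(1 − q^{2C(n,2)+1} T1^{2n−1} T2) + q^{n²} T1^n T2 (1 − q^{−n})(1 − q^{−(n−1)} T1^{n−1}) ] / [ (1 − q^{n²} T2)(1 − q^{n²} T1^n T2)(1 − q^{n²+1} T1^{2n−1} T2) ]. Then inverting q, T1, T2 (i.e. substituting q → q^{−1}, T1 → T1^{−1}, T2 → T2^{−1}) transforms Z into −q^{n²+2n} T2 · Z(q,T1,T2). -/

import Mathlib

noncomputable section

/- The field ℚ(q, T₁, T₂) of rational functions in three variables. -/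
abbrev Kfun : Type := FractionRing (MvPolynomial (Fin 3) ℚ)

def qv : Kfun := algebraMap (MvPolynomial (Fin 3) ℚ) Kfun (MvPolynomial.X 0)
def t1v : Kfun := algebraMap (MvPolynomial (Fin 3) ℚ) Kfun (MvPolynomial.X 1)
def t2v : Kfun := algebraMap (MvPolynomial (Fin 3) ℚ) Kfun (MvPolynomial.X 2)

/- Local bivariate conjugacy class zeta function of G_n (n ≥ 2). -/
def Zg (n : ℕ) (x u1 u2 : Kfun) : Kfun :=
  ((1 - x ^ (2 * n.choose 2) * u1 ^ n * u2) *
        (1 - x ^ (2 * n.choose 2 + 1) * u1 ^ (2 * n - 1) * u2) +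
      x ^ (n ^ 2) * u1 ^ n * u2 * (1 - x ^ (-(n : ℤ))) *
        (1 - x ^ (-((n : ℤ) - 1)) * u1 ^ (n - 1))) /
    ((1 - x ^ (n ^ 2) * u2) * (1 - x ^ (n ^ 2) * u1 ^ n * u2) *
      (1 - x ^ (n ^ 2 + 1) * u1 ^ (2 * n - 1) * u2))

/-!
Every factor of `Z` has the form `1 - M` for a monomial `M`, and `1 - M⁻¹ = -M⁻¹ * (1 - M)`.
So inverting the variables multiplies the denominator by `-(d m e)⁻¹`, where `d, m, e` are its
three monomials, and multiplies both summands of the numerator by `(a b)⁻¹`, where `a, b` are the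
monomials of the first summand: for the second summand `m (1 - P) (1 - R)` this is the monomial
identity `a b = m² P R`. Hence `Z` picks up the factor `-(d m e) / (a b) = -q^(n²+2n) T₂`.
-/

section

variable {K : Type*} [Field K]

def zetaShape (a b m P R d e : K) : K :=
  ((1 - a) * (1 - b) + m * (1 - P) * (1 - R)) / ((1 - d) * (1 - m) * (1 - e))

theorem zetaShape_inv {a b m P R d e : K} (ha : a ≠ 0) (hb : b ≠ 0) (hm : m ≠ 0)
    (hP : P ≠ 0) (hR : R ≠ 0) (hd : d ≠ 0) (he : e ≠ 0) (hab : a * b = m ^ 2 * P * R) :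
    zetaShape a⁻¹ b⁻¹ m⁻¹ P⁻¹ R⁻¹ d⁻¹ e⁻¹ =
      -(d * m * e / (a * b)) * zetaShape a b m P R d e := by
  have hnum : (1 - a⁻¹) * (1 - b⁻¹) + m⁻¹ * (1 - P⁻¹) * (1 - R⁻¹) =
      (a * b)⁻¹ * ((1 - a) * (1 - b) + m * (1 - P) * (1 - R)) := by
    field_simp
    linear_combination (1 - P) * (1 - R) * hab
  have hden : (1 - d⁻¹) * (1 - m⁻¹) * (1 - e⁻¹) =
      -(d * m * e)⁻¹ * ((1 - d) * (1 - m) * (1 - e)) := by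
    field_simp
    ring
  rw [zetaShape, zetaShape, hnum, hden]
  field_simp

end

lemma two_mul_choose_two_succ (k : ℕ) : 2 * (k + 1).choose 2 = (k + 1) * k := by
  rw [mul_comm, ← Nat.add_one_mul_choose_eq, Nat.choose_one_right]

lemma Zg_eq_zetaShape (n : ℕ) (x u1 u2 : Kfun) :
    Zg n x u1 u2 = zetaShape (x ^ (2 * n.choose 2) * u1 ^ n * u2)
      (x ^ (2 * n.choose 2 + 1) * u1 ^ (2 * n - 1) * u2) (x ^ (n ^ 2) * u1 ^ n * u2)
      (x ^ (-(n : ℤ))) (x ^ (-((n : ℤ) - 1)) * u1 ^ (n - 1))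
      (x ^ (n ^ 2) * u2) (x ^ (n ^ 2 + 1) * u1 ^ (2 * n - 1) * u2) :=
  rfl

theorem Zg_inv {n : ℕ} (hn : 1 ≤ n) {x u1 u2 : Kfun} (hx : x ≠ 0) (hu1 : u1 ≠ 0)
    (hu2 : u2 ≠ 0) :
    Zg n x⁻¹ u1⁻¹ u2⁻¹ = -x ^ (n ^ 2 + 2 * n) * u2 * Zg n x u1 u2 := by
  obtain ⟨k, rfl⟩ : ∃ k, n = k + 1 := ⟨n - 1, by omega⟩
  simp only [Zg_eq_zetaShape, inv_pow, inv_zpow, ← mul_inv]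
  rw [two_mul_choose_two_succ, show 2 * (k + 1) - 1 = 2 * k + 1 by omega,
    zetaShape_inv (by positivity) (by positivity) (by positivity) (by positivity)
      (by positivity) (by positivity) (by positivity)]
  · congr 1
    field_simp
    ring
  · rw [show ((k + 1 : ℕ) : ℤ) - 1 = k by omega]
    simp only [Nat.add_sub_cancel, zpow_neg, zpow_natCast]
    field_simp
    ring

lemma algebraMap_X_ne_zero (i : Fin 3) :
    algebraMap (MvPolynomial (Fin 3) ℚ) Kfun (MvPolynomial.X i) ≠ 0 :=
  IsFractionRing.to_map_eq_zero_iff.not.mpr (MvPolynomial.X_ne_zero i)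

theorem stmt17 (n : ℕ) (hn : 2 ≤ n) :
    Zg n qv⁻¹ t1v⁻¹ t2v⁻¹ = -qv ^ (n ^ 2 + 2 * n) * t2v * Zg n qv t1v t2v :=
  Zg_inv (by omega) (algebraMap_X_ne_zero 0) (algebraMap_X_ne_zero 1) (algebraMap_X_ne_zero 2)
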